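/- Let W ∈ ℝ^{N×N} be doubly stochastic with λ := ‖W − 1_N1_Nᵀ/N‖ (spectral norm). Let V, Δ ∈ ℝ^{(Nm)×n} be stacked matrices with blocks in ℝ^{m×n}, and set V' := (W ⊗ I_m)(V + Δ). Let V̄ and V̄' denote the averages of the blocks of V and V', respectively. Then ‖V' − 1_N ⊗ V̄'‖_* ≤ λ(‖V − 1_N ⊗ V̄‖_* + ‖Δ‖_*). -/

import Mathlib

open Matrix Kronecker

/-- Spectral norm: ℓ²→ℓ² operator norm of a real matrix. -/
noncomputable def specNorm {ι κ : Type*} [Fintype ι] [Fintype κ] [DecidableEq κ]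
    (A : Matrix ι κ ℝ) : ℝ :=
  ‖LinearMap.toContinuousLinearMap (Matrix.toEuclideanLin A)‖

/-- Nuclear norm: trace of the positive semidefinite square root of `Aᵀ * A`. -/
noncomputable def nucNorm {ι κ : Type*} [Fintype ι] [Fintype κ] [DecidableEq κ]
    (A : Matrix ι κ ℝ) : ℝ :=
  Matrix.trace
    (((Matrix.posSemidef_conjTranspose_mul_self A).1.eigenvectorUnitary : Matrix κ κ ℝ) *
      diagonal (((↑) : ℝ → ℝ) ∘ (fun x => Real.sqrt x) ∘
        (Matrix.posSemidef_conjTranspose_mul_self A).1.eigenvalues) *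
      (star (Matrix.posSemidef_conjTranspose_mul_self A).1.eigenvectorUnitary : Matrix κ κ ℝ))

/-- Frobenius norm. -/
noncomputable def frobNorm {ι κ : Type*} [Fintype ι] [Fintype κ] (A : Matrix ι κ ℝ) : ℝ :=
  Real.sqrt (∑ i, ∑ j, (A i j) ^ 2)

/-- Trace inner product `⟨A, B⟩ = trace (Aᵀ B)`. -/
noncomputable def tin {ι κ : Type*} [Fintype ι] [Fintype κ] (A B : Matrix ι κ ℝ) : ℝ :=
  Matrix.trace (Aᵀ * B)

/-- Vertical stacking of `N` matrices of size `m × n`. -/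
def vstack {N m n : ℕ} (Y : Fin N → Matrix (Fin m) (Fin n) ℝ) :
    Matrix (Fin N × Fin m) (Fin n) ℝ :=
  fun p j => Y p.1 p.2 j

/-- The `i`-th `m × n` block of a stacked `(N·m) × n` matrix. -/
def blk {N m n : ℕ} (Z : Matrix (Fin N × Fin m) (Fin n) ℝ) (i : Fin N) :
    Matrix (Fin m) (Fin n) ℝ :=
  fun a j => Z (i, a) j

/-!
Write `P = 1 1ᵀ / N`. Double stochasticity gives `P W = W P = P² = P`, so the consensus error of
`V'` is `((W - P) ⊗ I) (C + Δ)`, where `C` is the consensus error of `V`. The nuclear norm is dual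
to the spectral norm: `tr (Xᵀ B) ≤ ‖X‖ ‖B‖_*`, with equality for some `X` of norm at most one,
namely `X = B (BᵀB)^{-1/2}` (pseudo-inverse). Duality yields the triangle inequality and
`‖M B‖_* ≤ ‖M‖ ‖B‖_*`, and `‖K ⊗ I‖ ≤ ‖K‖` finishes the estimate.
-/

open scoped Matrix.Norms.L2Operator InnerProductSpace

theorem specNorm_eq_l2_opNorm {ι κ : Type*} [Fintype ι] [Fintype κ] [DecidableEq κ]
    (A : Matrix ι κ ℝ) : specNorm A = ‖A‖ :=
  rfl

namespace Matrix

variable {𝕜 ι ι' κ p : Type*} [RCLike 𝕜] [Fintype ι] [Fintype ι'] [Fintype κ] [Fintype p]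

section

variable [DecidableEq κ]

theorem trace_toEuclideanLin (A : Matrix κ κ 𝕜) :
    LinearMap.trace 𝕜 _ (toEuclideanLin A) = trace A := by
  rw [toEuclideanLin_eq_toLin_orthonormal,
    LinearMap.trace_eq_matrix_trace 𝕜 (EuclideanSpace.basisFun κ 𝕜).toBasis,
    LinearMap.toMatrix_toLin]

theorem trace_conjStarAlgAut (U : unitary (Matrix κ κ 𝕜)) (A : Matrix κ κ 𝕜) :
    trace (Unitary.conjStarAlgAut 𝕜 _ U A) = trace A := by
  rw [Unitary.conjStarAlgAut_apply, trace_mul_cycle, Unitary.coe_star_mul_self, Matrix.one_mul]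

theorem l2_opNorm_conjStarAlgAut (U : unitary (Matrix κ κ 𝕜)) (A : Matrix κ κ 𝕜) :
    ‖Unitary.conjStarAlgAut 𝕜 _ U A‖ = ‖A‖ := by
  rw [Unitary.conjStarAlgAut_apply, CStarRing.norm_mul_mem_unitary _ (Unitary.star_mem U.2),
    CStarRing.norm_coe_unitary_mul]

theorem norm_toEuclideanLin_le (A : Matrix ι κ 𝕜) (x : EuclideanSpace 𝕜 κ) :
    ‖toEuclideanLin A x‖ ≤ ‖A‖ * ‖x‖ :=
  A.l2_opNorm_mulVec x

theorem inner_toEuclideanLin_toEuclideanLin [DecidableEq ι] (X Y : Matrix ι κ 𝕜)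
    (x y : EuclideanSpace 𝕜 κ) :
    ⟪toEuclideanLin X x, toEuclideanLin Y y⟫_𝕜 = ⟪x, toEuclideanLin (Xᴴ * Y) y⟫_𝕜 := by
  rw [toLpLin_mul_same, LinearMap.comp_apply, toEuclideanLin_conjTranspose_eq_adjoint,
    LinearMap.adjoint_inner_right]

theorem trace_conjTranspose_mul_eq_sum_inner [DecidableEq ι] (X Y : Matrix ι κ 𝕜)
    (b : OrthonormalBasis ι' 𝕜 (EuclideanSpace 𝕜 κ)) :
    trace (Xᴴ * Y) = ∑ k, ⟪toEuclideanLin X (b k), toEuclideanLin Y (b k)⟫_𝕜 := by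
  simp only [inner_toEuclideanLin_toEuclideanLin, ← LinearMap.trace_eq_sum_inner,
    trace_toEuclideanLin]

end

theorem norm_sq_toLp_vec (Y : Matrix p ι 𝕜) :
    ‖WithLp.toLp 2 (vec Y)‖ ^ 2 = ∑ a, ‖WithLp.toLp 2 (Y a)‖ ^ 2 := by
  simp only [EuclideanSpace.norm_sq_eq, vec, Fintype.sum_prod_type]
  exact Finset.sum_comm

theorem l2_opNorm_kronecker_one_le [DecidableEq ι'] [DecidableEq p] (A : Matrix ι ι' 𝕜) :
    ‖A ⊗ₖ (1 : Matrix p p 𝕜)‖ ≤ ‖A‖ := by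
  rw [l2_opNorm_def]
  refine ContinuousLinearMap.opNorm_le_bound _ (norm_nonneg _) fun u => ?_
  set X : Matrix p ι' 𝕜 := of fun a j => u (j, a)
  have hu : u = WithLp.toLp 2 (vec X) := rfl
  have hrows : X * Aᵀ = of fun a => A *ᵥ X a := by
    ext a i
    simp [mul_apply, mulVec, dotProduct, mul_comm]
  refine (pow_le_pow_iff_left₀ (norm_nonneg _) (by positivity) two_ne_zero).1 ?_
  calc ‖toEuclideanLin (A ⊗ₖ (1 : Matrix p p 𝕜)) u‖ ^ 2
      = ∑ a, ‖toEuclideanLin A (WithLp.toLp 2 (X a))‖ ^ 2 := by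
        rw [hu, toLpLin_apply, WithLp.ofLp_toLp, kronecker_mulVec_vec, Matrix.one_mul, hrows,
          norm_sq_toLp_vec]
        rfl
    _ ≤ ∑ a, (‖A‖ * ‖WithLp.toLp 2 (X a)‖) ^ 2 := by
        gcongr with a
        exact norm_toEuclideanLin_le A _
    _ = (‖A‖ * ‖u‖) ^ 2 := by
        rw [hu, mul_pow, norm_sq_toLp_vec, Finset.mul_sum]
        simp only [mul_pow]

end Matrix

open Matrix

section NuclearNorm

variable {ι ι' κ : Type*} [Fintype ι] [Fintype ι'] [Fintype κ] [DecidableEq κ]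

theorem nucNorm_eq_sum_sqrt_eigenvalues (B : Matrix ι κ ℝ) :
    nucNorm B = ∑ k, √((isHermitian_conjTranspose_mul_self B).eigenvalues k) := by
  rw [nucNorm, ← Unitary.conjStarAlgAut_apply (S := ℝ), trace_conjStarAlgAut, trace_diagonal]
  rfl

theorem nucNorm_nonneg (B : Matrix ι κ ℝ) : 0 ≤ nucNorm B := by
  rw [nucNorm_eq_sum_sqrt_eigenvalues]
  positivity

theorem norm_toEuclideanLin_eigenvectorBasis (B : Matrix ι κ ℝ) (k : κ) :
    ‖toEuclideanLin B ((isHermitian_conjTranspose_mul_self B).eigenvectorBasis k)‖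
      = √((isHermitian_conjTranspose_mul_self B).eigenvalues k) := by
  classical
  set hB := isHermitian_conjTranspose_mul_self B
  set v := hB.eigenvectorBasis
  have hv : ⟪v k, toEuclideanLin (Bᴴ * B) (v k)⟫_ℝ = hB.eigenvalues k := by
    rw [toLpLin_apply, hB.mulVec_eigenvectorBasis, WithLp.toLp_smul, WithLp.toLp_ofLp,
      inner_smul_right, real_inner_self_eq_norm_sq, v.orthonormal.1 k]
    simp
  rw [← hv, ← inner_toEuclideanLin_toEuclideanLin, real_inner_self_eq_norm_sq,
    Real.sqrt_sq (norm_nonneg _)]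

theorem trace_conjTranspose_mul_le_nucNorm (X B : Matrix ι κ ℝ) :
    trace (Xᴴ * B) ≤ ‖X‖ * nucNorm B := by
  classical
  set hB := isHermitian_conjTranspose_mul_self B
  set v := hB.eigenvectorBasis
  rw [trace_conjTranspose_mul_eq_sum_inner X B v, nucNorm_eq_sum_sqrt_eigenvalues, Finset.mul_sum]
  gcongr with k
  calc ⟪toEuclideanLin X (v k), toEuclideanLin B (v k)⟫_ℝ
      ≤ ‖toEuclideanLin X (v k)‖ * ‖toEuclideanLin B (v k)‖ := real_inner_le_norm _ _
    _ ≤ ‖X‖ * √(hB.eigenvalues k) := by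
      rw [norm_toEuclideanLin_eigenvectorBasis]
      gcongr
      simpa [v.orthonormal.1 k] using norm_toEuclideanLin_le X (v k)

theorem exists_l2_opNorm_le_one_trace_eq_nucNorm (B : Matrix ι κ ℝ) :
    ∃ X : Matrix ι κ ℝ, ‖X‖ ≤ 1 ∧ trace (Xᴴ * B) = nucNorm B := by
  set hB := isHermitian_conjTranspose_mul_self B
  set μ := hB.eigenvalues
  set conj := Unitary.conjStarAlgAut ℝ (Matrix κ κ ℝ) hB.eigenvectorUnitary
  -- `(√0)⁻¹ = 0`, so `conj (diagonal c)` is the pseudo-inverse of `(Bᴴ B)^{1/2}`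
  set c : κ → ℝ := fun k => (√(μ k))⁻¹
  have hgram : Bᴴ * B = conj (diagonal μ) := by
    have h := hB.spectral_theorem
    rwa [RCLike.ofReal_real_eq_id, Function.id_comp] at h
  have hc : (conj (diagonal c))ᴴ = conj (diagonal c) := by
    rw [← star_eq_conjTranspose, ← map_star, star_eq_conjTranspose, diagonal_conjTranspose,
      star_trivial]
  have hcμ : ∀ k, c k * μ k = √(μ k) := fun k => by rw [inv_mul_eq_div, Real.div_sqrt]
  refine ⟨B * conj (diagonal c), ?_, ?_⟩
  · have hsq : (B * conj (diagonal c))ᴴ * (B * conj (diagonal c))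
        = conj (diagonal fun k => c k * μ k * c k) := by
      rw [conjTranspose_mul, hc, Matrix.mul_assoc, ← Matrix.mul_assoc Bᴴ, hgram, ← map_mul,
        ← map_mul, diagonal_mul_diagonal, diagonal_mul_diagonal]
      simp only [mul_assoc]
    have hle : ‖(B * conj (diagonal c))ᴴ * (B * conj (diagonal c))‖ ≤ 1 := by
      rw [hsq, l2_opNorm_conjStarAlgAut, l2_opNorm_diagonal]
      refine (pi_norm_le_iff_of_nonneg zero_le_one).2 fun k => ?_
      rw [hcμ, Real.norm_of_nonneg (by positivity)]
      exact mul_inv_le_one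
    rw [l2_opNorm_conjTranspose_mul_self] at hle
    nlinarith [norm_nonneg (B * conj (diagonal c))]
  · rw [conjTranspose_mul, hc, Matrix.mul_assoc, hgram, ← map_mul, trace_conjStarAlgAut,
      diagonal_mul_diagonal, trace_diagonal, nucNorm_eq_sum_sqrt_eigenvalues]
    exact Finset.sum_congr rfl fun k _ => hcμ k

theorem nucNorm_add_le (C D : Matrix ι κ ℝ) : nucNorm (C + D) ≤ nucNorm C + nucNorm D := by
  obtain ⟨X, hX, hXCD⟩ := exists_l2_opNorm_le_one_trace_eq_nucNorm (C + D)
  calc nucNorm (C + D) = trace (Xᴴ * C) + trace (Xᴴ * D) := by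
        rw [← hXCD, Matrix.mul_add, trace_add]
    _ ≤ ‖X‖ * (nucNorm C + nucNorm D) := by
      rw [mul_add]
      exact add_le_add (trace_conjTranspose_mul_le_nucNorm X C)
        (trace_conjTranspose_mul_le_nucNorm X D)
    _ ≤ nucNorm C + nucNorm D :=
      mul_le_of_le_one_left (add_nonneg (nucNorm_nonneg C) (nucNorm_nonneg D)) hX

theorem nucNorm_mul_le [DecidableEq ι] (M : Matrix ι' ι ℝ) (B : Matrix ι κ ℝ) :
    nucNorm (M * B) ≤ ‖M‖ * nucNorm B := by
  classical
  obtain ⟨X, hX, hXMB⟩ := exists_l2_opNorm_le_one_trace_eq_nucNorm (M * B)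
  calc nucNorm (M * B) = trace ((Mᴴ * X)ᴴ * B) := by
        rw [← hXMB, conjTranspose_mul, conjTranspose_conjTranspose, Matrix.mul_assoc]
    _ ≤ ‖Mᴴ * X‖ * nucNorm B := trace_conjTranspose_mul_le_nucNorm _ _
    _ ≤ ‖M‖ * nucNorm B := by
      gcongr
      · exact nucNorm_nonneg B
      calc ‖Mᴴ * X‖ ≤ ‖Mᴴ‖ * ‖X‖ := l2_opNorm_mul _ _
        _ ≤ ‖M‖ := by
          rw [l2_opNorm_conjTranspose]
          exact mul_le_of_le_one_right (norm_nonneg _) hX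

end NuclearNorm

section Consensus

variable {N m n : ℕ}

local notation "P" => ((N : ℝ)⁻¹ • Matrix.of (fun _ _ => (1 : ℝ)) : Matrix (Fin N) (Fin N) ℝ)

theorem vstack_average_blk_eq_kronecker_mul (Z : Matrix (Fin N × Fin m) (Fin n) ℝ) :
    vstack (fun _ => (N : ℝ)⁻¹ • ∑ i, blk Z i) = (P ⊗ₖ (1 : Matrix (Fin m) (Fin m) ℝ)) * Z := by
  ext ⟨i, a⟩ j
  simp [vstack, blk, mul_apply, Fintype.sum_prod_type, one_apply, Matrix.sum_apply,
    Finset.mul_sum]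

theorem average_mul_of_col_sum {W : Matrix (Fin N) (Fin N) ℝ} (hcol : ∀ j, ∑ i, W i j = 1) :
    P * W = P := by
  ext i j
  simp [mul_apply, ← Finset.mul_sum, hcol]

theorem mul_average_of_row_sum {W : Matrix (Fin N) (Fin N) ℝ} (hrow : ∀ i, ∑ j, W i j = 1) :
    W * P = P := by
  ext i j
  simp [mul_apply, ← Finset.sum_mul, hrow]

theorem average_mul_average : P * P = P := by
  ext i j
  have hN : (N : ℝ) ≠ 0 := by simpa using (Fin.pos i).ne'
  simp only [smul_of, mul_apply, of_apply, Pi.smul_apply, smul_eq_mul, mul_one, Finset.sum_const,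
    Finset.card_univ, Fintype.card_fin, nsmul_eq_mul, Matrix.smul_apply]
  field_simp

theorem consensus_error_eq {W : Matrix (Fin N) (Fin N) ℝ} (hrow : ∀ i, ∑ j, W i j = 1)
    (hcol : ∀ j, ∑ i, W i j = 1) (V Δ : Matrix (Fin N × Fin m) (Fin n) ℝ) :
    (W ⊗ₖ (1 : Matrix (Fin m) (Fin m) ℝ)) * (V + Δ)
        - vstack (fun _ =>
            (N : ℝ)⁻¹ • ∑ i, blk ((W ⊗ₖ (1 : Matrix (Fin m) (Fin m) ℝ)) * (V + Δ)) i)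
      = ((W - P) ⊗ₖ (1 : Matrix (Fin m) (Fin m) ℝ))
          * (V - vstack (fun _ => (N : ℝ)⁻¹ • ∑ i, blk V i))
        + ((W - P) ⊗ₖ (1 : Matrix (Fin m) (Fin m) ℝ)) * Δ := by
  have hPW : (P ⊗ₖ (1 : Matrix (Fin m) (Fin m) ℝ)) * (W ⊗ₖ 1) = P ⊗ₖ 1 := by
    rw [← mul_kronecker_mul, Matrix.one_mul, average_mul_of_col_sum hcol]
  have hKP : ((W - P) ⊗ₖ (1 : Matrix (Fin m) (Fin m) ℝ)) * (P ⊗ₖ 1) = 0 := by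
    rw [← mul_kronecker_mul, Matrix.one_mul, Matrix.sub_mul, mul_average_of_row_sum hrow,
      average_mul_average, sub_self, zero_kronecker]
  have hsub : W ⊗ₖ (1 : Matrix (Fin m) (Fin m) ℝ) - P ⊗ₖ 1 = (W - P) ⊗ₖ 1 := by
    rw [sub_eq_iff_eq_add, ← add_kronecker, sub_add_cancel]
  rw [vstack_average_blk_eq_kronecker_mul, vstack_average_blk_eq_kronecker_mul,
    ← Matrix.mul_assoc, hPW, ← Matrix.sub_mul, hsub, Matrix.mul_sub, ← Matrix.mul_assoc, hKP,
    Matrix.zero_mul, sub_zero, Matrix.mul_add]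

end Consensus

theorem stmt15_general {N m n : ℕ} (W : Matrix (Fin N) (Fin N) ℝ)
    (hrow : ∀ i, ∑ j, W i j = 1) (hcol : ∀ j, ∑ i, W i j = 1)
    (lam : ℝ)
    (hlam : lam = specNorm (W - (N : ℝ)⁻¹ • Matrix.of (fun _ _ => (1 : ℝ))))
    (V Δ : Matrix (Fin N × Fin m) (Fin n) ℝ) :
    nucNorm ((W ⊗ₖ (1 : Matrix (Fin m) (Fin m) ℝ)) * (V + Δ)
        - vstack (fun _ =>
            (N : ℝ)⁻¹ • ∑ i, blk ((W ⊗ₖ (1 : Matrix (Fin m) (Fin m) ℝ)) * (V + Δ)) i))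
      ≤ lam * (nucNorm (V - vstack (fun _ => (N : ℝ)⁻¹ • ∑ i, blk V i)) + nucNorm Δ) := by
  rw [hlam, consensus_error_eq hrow hcol V Δ, specNorm_eq_l2_opNorm, mul_add]
  set K := (W - (N : ℝ)⁻¹ • Matrix.of (fun _ _ => (1 : ℝ))) ⊗ₖ (1 : Matrix (Fin m) (Fin m) ℝ)
  set C := V - vstack (fun _ => (N : ℝ)⁻¹ • ∑ i, blk V i)
  have hK : ‖K‖ ≤ ‖W - (N : ℝ)⁻¹ • Matrix.of (fun _ _ => (1 : ℝ))‖ :=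
    l2_opNorm_kronecker_one_le _
  calc nucNorm (K * C + K * Δ) ≤ nucNorm (K * C) + nucNorm (K * Δ) := nucNorm_add_le _ _
    _ ≤ ‖K‖ * nucNorm C + ‖K‖ * nucNorm Δ :=
      add_le_add (nucNorm_mul_le K C) (nucNorm_mul_le K Δ)
    _ ≤ _ := by gcongr <;> exact nucNorm_nonneg _

theorem stmt15 {N m n : ℕ} (hN : 0 < N) (W : Matrix (Fin N) (Fin N) ℝ)
    (hrow : ∀ i, ∑ j, W i j = 1) (hcol : ∀ j, ∑ i, W i j = 1)
    (lam : ℝ)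
    (hlam : lam = specNorm (W - (N : ℝ)⁻¹ • Matrix.of (fun _ _ => (1 : ℝ))))
    (V Δ : Matrix (Fin N × Fin m) (Fin n) ℝ) :
    nucNorm ((W ⊗ₖ (1 : Matrix (Fin m) (Fin m) ℝ)) * (V + Δ)
        - vstack (fun _ =>
            (N : ℝ)⁻¹ • ∑ i, blk ((W ⊗ₖ (1 : Matrix (Fin m) (Fin m) ℝ)) * (V + Δ)) i))
      ≤ lam * (nucNorm (V - vstack (fun _ => (N : ℝ)⁻¹ • ∑ i, blk V i)) + nucNorm Δ) :=
  stmt15_general W hrow hcol lam hlam V Δ
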